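/- arXiv:1103.0629 — 7 statements merged into one kernel-verified Lean document; each statement's English description precedes it below -/
import Mathlib

section
/- Let T be a d-dimensional simplex in ℝ^d with vertices in ℤ^d whose interior contains exactly one point of ℤ^d, and let β₀,…,β_d be the barycentric coordinates of this interior lattice point with respect to T. Then for every partition of {0,…,d} into nonempty disjoint sets I and J, one has ∑_{i∈I} β_i ≥ ∏_{j∈J} β_j. -/
/-!
Suppose `∑_{i ∈ I} β i < ∏_{j ∈ J} β j`. The body `{x ∈ ℝ^J : |x j - β j * ∑ x| < β j}` is convex,
symmetric, and the preimage of a box of volume `2^|J| ∏_J β` under a linear map of determinant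
`1 - ∑_J β = ∑_I β`, so its volume exceeds `2^|J|`. Minkowski's theorem yields an integer vector
`m`, which after a sign change has `M = ∑ m > 0` and `m j < β j (1 + M)`. Extending `m` by zero,
`(1 + M) q - ∑ m i v i` is a lattice point with barycentric coordinates `β i (1 + M) - m i > 0`,
hence equal to `q`; at an index of `I` this reads `β i (1 + M) = β i`, contradicting `M > 0`.
-/

open MeasureTheory Module Set

section Minkowski

variable {ι : Type*} [Fintype ι]

theorem exists_int_ne_zero_mem_of_two_pow_card_lt_volume {s : Set (ι → ℝ)}
    (h_symm : ∀ x ∈ s, -x ∈ s) (h_conv : Convex ℝ s) (h : 2 ^ Fintype.card ι < volume s) :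
    ∃ m : ι → ℤ, m ≠ 0 ∧ (fun i => (m i : ℝ)) ∈ s := by
  have fund := ZSpan.isAddFundamentalDomain' (Pi.basisFun ℝ ι) volume
  have h_covol : volume (ZSpan.fundamentalDomain (Pi.basisFun ℝ ι)) = 1 := by
    simp [ZSpan.fundamentalDomain_pi_basisFun, volume_pi_pi, Real.volume_Ico]
  -- not found by instance search through `Submodule.toAddSubgroup`
  have : Countable (Submodule.span ℤ (range (Pi.basisFun ℝ ι))).toAddSubgroup :=
    inferInstanceAs (Countable (Submodule.span ℤ (range (Pi.basisFun ℝ ι))))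
  obtain ⟨⟨x, hx⟩, hx0, hxs⟩ := exists_ne_zero_mem_lattice_of_measure_mul_two_pow_lt_measure fund
    h_symm h_conv (by simpa [h_covol, finrank_pi] using h)
  choose m hm using ((Pi.basisFun ℝ ι).mem_span_iff_repr_mem ℤ x).1 hx
  have hxm : x = fun i => (m i : ℝ) := funext fun i => by simpa using (hm i).symm
  subst hxm
  refine ⟨m, fun hm0 => hx0 ?_, hxs⟩
  ext i
  simp [hm0]

variable (b : ι → ℝ)

def subSumSmul : (ι → ℝ) →ₗ[ℝ] ι → ℝ :=
  LinearMap.id - (∑ j, LinearMap.proj j : (ι → ℝ) →ₗ[ℝ] ℝ).smulRight b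

theorem subSumSmul_apply (x : ι → ℝ) (i : ι) : subSumSmul b x i = x i - b i * ∑ j, x j := by
  simp [subSumSmul, mul_comm]

theorem det_subSumSmul : LinearMap.det (subSumSmul b) = 1 - ∑ i, b i := by
  classical
  have : subSumSmul b = Matrix.toLin'
      (1 + Matrix.replicateCol Unit (-b) * Matrix.replicateRow Unit fun _ : ι => (1 : ℝ)) := by
    ext x i
    simp [subSumSmul_apply, Matrix.mulVec, dotProduct, sub_eq_add_neg]
  rw [this, LinearMap.det_toLin', Matrix.det_one_add_replicateCol_mul_replicateRow]
  simp [dotProduct, sub_eq_add_neg]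

theorem volume_preimage_subSumSmul_pi_Ioo (hb : ∀ i, 0 ≤ b i) (hσ : 0 < 1 - ∑ i, b i) :
    volume (subSumSmul b ⁻¹' univ.pi fun i => Ioo (-b i) (b i)) =
      ENNReal.ofReal ((∏ i, 2 * b i) / (1 - ∑ i, b i)) := by
  rw [Measure.addHaar_preimage_linearMap _ (by rw [det_subSumSmul]; exact hσ.ne'), volume_pi_pi,
    det_subSumSmul, abs_inv, abs_of_pos hσ]
  simp_rw [Real.volume_Ioo, sub_neg_eq_add, ← two_mul]
  rw [← ENNReal.ofReal_prod_of_nonneg fun i _ => mul_nonneg zero_le_two (hb i),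
    ← ENNReal.ofReal_mul (inv_nonneg.2 hσ.le), inv_mul_eq_div]

variable {b}

theorem exists_int_ne_zero_abs_sub_mul_sum_lt (hb : ∀ i, 0 ≤ b i) (hσ : 0 < 1 - ∑ i, b i)
    (hlt : 1 - ∑ i, b i < ∏ i, b i) :
    ∃ m : ι → ℤ, m ≠ 0 ∧ ∀ i, |(m i : ℝ) - b i * ∑ j, (m j : ℝ)| < b i := by
  set s := subSumSmul b ⁻¹' univ.pi fun i => Ioo (-b i) (b i)
  have h_symm : ∀ x ∈ s, -x ∈ s := fun x hx i _ => by
    have := hx i trivial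
    simp only [map_neg, Pi.neg_apply, mem_Ioo] at this ⊢
    constructor <;> linarith [this.1, this.2]
  have h_conv : Convex ℝ s := (convex_pi fun i _ => convex_Ioo _ _).linear_preimage _
  have h_vol : 2 ^ Fintype.card ι < volume s := by
    rw [volume_preimage_subSumSmul_pi_Ioo b hb hσ, Finset.prod_mul_distrib, Finset.prod_const,
      Finset.card_univ, mul_div_assoc, ← ENNReal.ofReal_ofNat 2, ← ENNReal.ofReal_pow zero_le_two,
      ENNReal.ofReal_lt_ofReal_iff_of_nonneg (by positivity)]
    exact lt_mul_of_one_lt_right (by positivity) ((one_lt_div hσ).2 hlt)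
  obtain ⟨m, hm0, hms⟩ := exists_int_ne_zero_mem_of_two_pow_card_lt_volume h_symm h_conv h_vol
  refine ⟨m, hm0, fun i => abs_lt.2 ?_⟩
  simpa only [mem_Ioo, subSumSmul_apply] using hms i trivial

theorem exists_int_sum_pos_lt_mul_one_add_sum (hb : ∀ i, 0 ≤ b i) (hσ : 0 < 1 - ∑ i, b i)
    (hlt : 1 - ∑ i, b i < ∏ i, b i) :
    ∃ m : ι → ℤ, 0 < ∑ i, m i ∧ ∀ i, (m i : ℝ) < b i * (1 + ∑ j, (m j : ℝ)) := by
  obtain ⟨m, hm0, hm⟩ := exists_int_ne_zero_abs_sub_mul_sum_lt hb hσ hlt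
  have hsum : ∑ i, m i ≠ 0 := by
    intro hsum
    refine hm0 (funext fun i => ?_)
    have hbi : b i < 1 := by
      linarith [Finset.single_le_sum (fun j _ => hb j) (Finset.mem_univ i)]
    have : |(m i : ℝ)| < 1 := by
      simpa [← Int.cast_sum, hsum] using (hm i).trans hbi
    exact Int.abs_lt_one_iff.mp (by exact_mod_cast this)
  rcases hsum.lt_or_gt with hneg | hpos
  · refine ⟨-m, by simpa using hneg, fun i => ?_⟩
    simp only [Pi.neg_apply, Int.cast_neg, Finset.sum_neg_distrib]
    linarith [(abs_lt.1 (hm i)).1]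
  · exact ⟨m, hpos, fun i => by linarith [(abs_lt.1 (hm i)).2]⟩

end Minkowski

theorem Finset.exists_int_sum_pos_lt_mul_one_add_sum {ι : Type*} [Fintype ι] (J : Finset ι)
    {β : ι → ℝ} (hβ : ∀ i, 0 < β i) (hσ : 0 < 1 - ∑ i ∈ J, β i)
    (hlt : 1 - ∑ i ∈ J, β i < ∏ i ∈ J, β i) :
    ∃ m : ι → ℤ, (∀ i ∉ J, m i = 0) ∧ 0 < ∑ i, m i ∧
      ∀ i, (m i : ℝ) < β i * (1 + ∑ j, (m j : ℝ)) := by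
  classical
  obtain ⟨m, hpos, hm⟩ := _root_.exists_int_sum_pos_lt_mul_one_add_sum (b := fun i : J => β i)
    (fun i => (hβ i).le) (by rwa [J.sum_coe_sort β]) (by rwa [J.sum_coe_sort β, J.prod_coe_sort β])
  set m' : ι → ℤ := fun i => if h : i ∈ J then m ⟨i, h⟩ else 0
  have hm'J : ∀ i ∉ J, m' i = 0 := fun i hi => dif_neg hi
  have hsum : ∑ i, m' i = ∑ i, m i := by
    rw [← Finset.sum_subset J.subset_univ fun i _ hi => hm'J i hi, ← J.sum_coe_sort m']
    exact Finset.sum_congr rfl fun i _ => dif_pos i.2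
  have hsumR : ∑ i, (m' i : ℝ) = ∑ i, (m i : ℝ) := by exact_mod_cast hsum
  refine ⟨m', hm'J, hsum ▸ hpos, fun i => ?_⟩
  rw [hsumR]
  by_cases hi : i ∈ J
  · simpa only [m', dif_pos hi] using hm ⟨i, hi⟩
  · rw [hm'J i hi, Int.cast_zero]
    exact mul_pos (hβ i) (by exact_mod_cast (hpos.trans (lt_one_add _)))

theorem AffineBasis.coord_sum_smul {ι k V : Type*} [Fintype ι] [Ring k] [AddCommGroup V]
    [Module k V] (b : AffineBasis ι k V) {w : ι → k} (hw : ∑ i, w i = 1) (i : ι) :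
    b.coord i (∑ j, w j • b j) = w i := by
  rw [← Finset.univ.affineCombination_eq_linear_combination _ _ hw]
  exact b.coord_apply_combination_of_mem (Finset.mem_univ i) hw

theorem AffineBasis.int_eq_coord_mul_sum_of_unique_mem_interior {ι V : Type*} [Fintype ι]
    [NormedAddCommGroup V] [NormedSpace ℝ V] (b : AffineBasis ι ℝ V) {L : AddSubgroup V}
    (hbL : ∀ i, b i ∈ L) {p : V} (hpL : p ∈ L)
    (huniq : ∀ x ∈ L, x ∈ interior (convexHull ℝ (range b)) → x = p) {m : ι → ℤ}
    (hm : ∀ i, (m i : ℝ) < b.coord i p * (1 + ∑ j, (m j : ℝ))) (i : ι) :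
    (m i : ℝ) = b.coord i p * ∑ j, (m j : ℝ) := by
  set w : ι → ℝ := fun i => b.coord i p * (1 + ∑ j, (m j : ℝ)) - m i
  have hw : ∑ i, w i = 1 := by
    simp only [w, Finset.sum_sub_distrib, ← Finset.sum_mul, b.sum_coord_apply_eq_one, one_mul,
      add_sub_cancel_right]
  have hxL : ∑ j, w j • b j ∈ L := by
    have : ∑ j, w j • b j = ((1 + ∑ j, m j : ℤ) : ℝ) • p - ∑ j, (m j : ℝ) • b j := by
      simp only [w, sub_smul, Finset.sum_sub_distrib, mul_comm (b.coord _ p), mul_smul,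
        ← Finset.smul_sum, b.linear_combination_coord_eq_self]
      push_cast
      rfl
    rw [this]
    simp only [Int.cast_smul_eq_zsmul]
    exact sub_mem (zsmul_mem hpL _) (sum_mem fun j _ => zsmul_mem (hbL j) _)
  have hx : ∑ j, w j • b j = p := huniq _ hxL <| by
    rw [b.interior_convexHull]
    intro j
    rw [b.coord_sum_smul hw]
    exact sub_pos.2 (hm j)
  have := b.coord_sum_smul hw i
  rw [hx] at this
  simp only [w] at this
  linarith

theorem stmt0_general (d : ℕ) (v : Fin (d + 1) → Fin d → ℤ)
    (hind : AffineIndependent ℝ (fun i => fun j => ((v i j : ℤ) : ℝ)))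
    (q : Fin d → ℤ)
    (hq : (fun j => ((q j : ℤ) : ℝ)) ∈
      interior (convexHull ℝ (Set.range (fun i => fun j => ((v i j : ℤ) : ℝ)))))
    (huniq : ∀ q' : Fin d → ℤ,
      (fun j => ((q' j : ℤ) : ℝ)) ∈
        interior (convexHull ℝ (Set.range (fun i => fun j => ((v i j : ℤ) : ℝ)))) → q' = q)
    (β : Fin (d + 1) → ℝ)
    (hsum : ∑ i, β i = 1)
    (hbar : (∑ i, β i • (fun j => ((v i j : ℤ) : ℝ))) = fun j => ((q j : ℤ) : ℝ))
    (I J : Finset (Fin (d + 1))) (hI : I.Nonempty)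
    (hdisj : Disjoint I J) (hunion : I ∪ J = Finset.univ) :
    ∑ i ∈ I, β i ≥ ∏ j ∈ J, β j := by
  set L := (AddMonoidHom.compLeft (Int.castAddHom ℝ) (Fin d)).range
  let b : AffineBasis (Fin (d + 1)) ℝ (Fin d → ℝ) :=
    ⟨_, hind, interior_convexHull_nonempty_iff_affineSpan_eq_top.1 ⟨_, hq⟩⟩
  have hvL : ∀ i, b i ∈ L := fun i => ⟨v i, rfl⟩
  have hqL : (fun j => (q j : ℝ)) ∈ L := ⟨q, rfl⟩
  have huniqL : ∀ x ∈ L, x ∈ interior (convexHull ℝ (range b)) → x = fun j => (q j : ℝ) := by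
    rintro _ ⟨q', rfl⟩ hq'
    rw [huniq q' hq']
    rfl
  have hβ : ∀ i, b.coord i (fun j => (q j : ℝ)) = β i := fun i => hbar ▸ b.coord_sum_smul hsum i
  have hβpos : ∀ i, 0 < β i := fun i => hβ i ▸ (b.interior_convexHull ▸ hq) i
  have hIJ : ∑ i ∈ I, β i = 1 - ∑ i ∈ J, β i := by
    rw [← hsum, ← hunion, Finset.sum_union hdisj, add_sub_cancel_right]
  obtain ⟨i₀, hi₀⟩ := hI
  by_contra! hlt
  obtain ⟨m, hmJ, hmpos, hm⟩ := J.exists_int_sum_pos_lt_mul_one_add_sum hβpos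
    (hIJ ▸ Finset.sum_pos (fun i _ => hβpos i) ⟨i₀, hi₀⟩) (hIJ ▸ hlt)
  have key := b.int_eq_coord_mul_sum_of_unique_mem_interior hvL hqL huniqL (m := m)
    (by simpa only [hβ]) i₀
  rw [hβ, hmJ i₀ (Finset.disjoint_left.1 hdisj hi₀), Int.cast_zero] at key
  have : 0 < ∑ j, (m j : ℝ) := by exact_mod_cast hmpos
  exact (mul_pos (hβpos i₀) this).ne key

/-- Theorem 1 (polynomial inequalities for the barycentric coordinates of the
unique interior lattice point of a lattice simplex). -/
theorem stmt0 (d : ℕ) (v : Fin (d + 1) → Fin d → ℤ)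
    (hind : AffineIndependent ℝ (fun i => fun j => ((v i j : ℤ) : ℝ)))
    (q : Fin d → ℤ)
    (hq : (fun j => ((q j : ℤ) : ℝ)) ∈
      interior (convexHull ℝ (Set.range (fun i => fun j => ((v i j : ℤ) : ℝ)))))
    (huniq : ∀ q' : Fin d → ℤ,
      (fun j => ((q' j : ℤ) : ℝ)) ∈
        interior (convexHull ℝ (Set.range (fun i => fun j => ((v i j : ℤ) : ℝ)))) → q' = q)
    (β : Fin (d + 1) → ℝ)
    (hsum : ∑ i, β i = 1)
    (hbar : (∑ i, β i • (fun j => ((v i j : ℤ) : ℝ))) = fun j => ((q j : ℤ) : ℝ))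
    (I J : Finset (Fin (d + 1))) (hI : I.Nonempty) (hJ : J.Nonempty)
    (hdisj : Disjoint I J) (hunion : I ∪ J = Finset.univ) :
    ∑ i ∈ I, β i ≥ ∏ j ∈ J, β j :=
  stmt0_general d v hind q hq huniq β hsum hbar I J hI hdisj hunion
end

section
/- Let T be a d-dimensional simplex in ℝ^d with integer vertices having exactly one interior lattice point, and suppose its barycentric coordinates β₀ ≥ β₁ ≥ … ≥ β_d > 0 (with respect to T) satisfy the inequalities ∑_{i=j+1}^{d} β_i ≥ ∏_{i=0}^{j} β_i for all j ∈ {0,…,d−1}. Then β_i ≥ (d+1)^{−2^i} for every i ∈ {0,…,d}. -/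
/-!
Put `a = (d+1)⁻¹` and `P_j = β₀ ⋯ β_j`. Since `β` is decreasing and sums to `1`, `β₀ ≥ a`, and
the hypothesis gives `P_j ≤ β_{j+1} + ⋯ + β_d ≤ (d+1) β_{j+1}`, i.e. `β_{j+1} ≥ a P_j`.
Inductively `β_j ≥ a^{2^j}` and `a P_j ≥ a^{2^{j+1}}`: the exponent doubles at each step because
`a P_{j+1} = (a P_j) β_{j+1} ≥ a^{2^{j+1}} a^{2^{j+1}}`.
-/

-- `β` is read as a sequence `k ↦ β (k : Fin (d + 1))`, where the cast reduces `k` mod `d + 1`.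
open Finset Fin.NatCast

section DoublyExponential

variable {R : Type*} [CommSemiring R] [PartialOrder R] [IsOrderedRing R]
  {a : R} {b : ℕ → R} {n : ℕ}

theorem pow_two_pow_le_and_pow_two_pow_succ_le_mul_prod (ha : 0 ≤ a) (h0 : a ≤ b 0)
    (hstep : ∀ j < n, a * ∏ k ∈ range (j + 1), b k ≤ b (j + 1)) :
    ∀ j ≤ n, a ^ 2 ^ j ≤ b j ∧ a ^ 2 ^ (j + 1) ≤ a * ∏ k ∈ range (j + 1), b k := by
  intro j hj
  have hpow : ∀ m, 0 ≤ a ^ m := fun m => pow_nonneg ha m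
  induction j with
  | zero => simpa [sq] using And.intro h0 (mul_le_mul_of_nonneg_left h0 ha)
  | succ j ih =>
    obtain ⟨-, hprod⟩ := ih (by omega)
    have hb : a ^ 2 ^ (j + 1) ≤ b (j + 1) := hprod.trans (hstep j (by omega))
    refine ⟨hb, ?_⟩
    calc a ^ 2 ^ (j + 1 + 1) = a ^ 2 ^ (j + 1) * a ^ 2 ^ (j + 1) := by rw [← pow_add]; ring_nf
      _ ≤ (a * ∏ k ∈ range (j + 1), b k) * b (j + 1) :=
        mul_le_mul hprod hb (hpow _) ((hpow _).trans hprod)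
      _ = a * ∏ k ∈ range (j + 1 + 1), b k := by rw [prod_range_succ _ (j + 1), mul_assoc]

end DoublyExponential

namespace Fin

theorem prod_filter_val_le_eq_prod_range {M : Type*} [CommMonoid M] {n j : ℕ}
    (f : Fin (n + 1) → M) (hj : j < n + 1) :
    ∏ i ∈ univ.filter (fun i : Fin (n + 1) => (i : ℕ) ≤ j), f i = ∏ k ∈ range (j + 1), f k := by
  refine prod_nbij' (fun i => (i : ℕ)) (fun k => (k : Fin (n + 1))) ?_ ?_ ?_ ?_ ?_
  · intro i hi
    simp_all
  · intro k hk
    rw [mem_range] at hk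
    simp [Nat.mod_eq_of_lt (hk.trans_le hj), Nat.lt_succ_iff.mp hk]
  · exact fun i _ => by simp
  · intro k hk
    rw [mem_range] at hk
    simp [Nat.mod_eq_of_lt (hk.trans_le hj)]
  · exact fun i _ => by simp

theorem sum_filter_val_gt_le_mul {R : Type*} [Semiring R] [PartialOrder R] [IsOrderedRing R]
    {n j : ℕ} {f : Fin (n + 1) → R} (hf : Antitone f) (hf0 : 0 ≤ f (j + 1 : ℕ)) :
    ∑ i ∈ univ.filter (fun i : Fin (n + 1) => j < (i : ℕ)), f i ≤ (n + 1) * f (j + 1 : ℕ) := by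
  have hle : ∀ i ∈ univ.filter (fun i : Fin (n + 1) => j < (i : ℕ)), f i ≤ f (j + 1 : ℕ) := by
    intro i hi
    refine hf (le_def.mpr ?_)
    rw [mem_filter] at hi
    exact (Nat.mod_le _ _).trans hi.2
  calc ∑ i ∈ univ.filter (fun i : Fin (n + 1) => j < (i : ℕ)), f i
      ≤ #(univ.filter fun i : Fin (n + 1) => j < (i : ℕ)) • f (j + 1 : ℕ) :=
        sum_le_card_nsmul _ _ _ hle
    _ ≤ (n + 1) * f (j + 1 : ℕ) := by
      rw [nsmul_eq_mul]
      refine mul_le_mul_of_nonneg_right ?_ hf0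
      have hcard : #(univ.filter fun i : Fin (n + 1) => j < (i : ℕ)) ≤ n + 1 :=
        (card_filter_le _ _).trans_eq (card_fin _)
      simpa using Nat.mono_cast (α := R) hcard

end Fin

theorem stmt2_general (d : ℕ)
    (β : Fin (d + 1) → ℝ)
    (hsum : ∑ i, β i = 1)
    (hord : ∀ i j : Fin (d + 1), i ≤ j → β j ≤ β i)
    (hpos : ∀ i, 0 < β i)
    (hineq : ∀ j : ℕ, j < d →
      ∑ i ∈ Finset.univ.filter (fun i : Fin (d + 1) => j < (i : ℕ)), β i ≥
        ∏ i ∈ Finset.univ.filter (fun i : Fin (d + 1) => (i : ℕ) ≤ j), β i) :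
    ∀ i : Fin (d + 1), β i ≥ (((d : ℝ) + 1) ^ (2 ^ (i : ℕ)))⁻¹ := by
  have hd : (0 : ℝ) < d + 1 := by positivity
  have h0 : ((d : ℝ) + 1)⁻¹ ≤ β (0 : ℕ) := by
    rw [inv_le_iff_one_le_mul₀' hd]
    calc 1 = ∑ i, β i := hsum.symm
      _ ≤ #(univ : Finset (Fin (d + 1))) • β (0 : ℕ) :=
          sum_le_card_nsmul _ _ _ fun i _ => hord _ _ (by simp)
      _ = (d + 1) * β (0 : ℕ) := by simp
  have hstep : ∀ j < d, ((d : ℝ) + 1)⁻¹ * ∏ k ∈ range (j + 1), β k ≤ β (j + 1 : ℕ) := by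
    intro j hj
    rw [inv_mul_le_iff₀ hd, ← Fin.prod_filter_val_le_eq_prod_range β (by omega)]
    exact (hineq j hj).trans (Fin.sum_filter_val_gt_le_mul hord (hpos _).le)
  intro i
  simpa [inv_pow] using
    (pow_two_pow_le_and_pow_two_pow_succ_le_mul_prod (by positivity) h0 hstep i (by omega)).1

/-- Lower bounds `β_i ≥ (d+1)^{-2^i}` for the ordered barycentric coordinates of the
unique interior lattice point of a lattice simplex, given the inequalities of Theorem 1. -/
theorem stmt2 (d : ℕ) (v : Fin (d + 1) → Fin d → ℤ)
    (hind : AffineIndependent ℝ (fun i => fun j => ((v i j : ℤ) : ℝ)))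
    (q : Fin d → ℤ)
    (hq : (fun j => ((q j : ℤ) : ℝ)) ∈
      interior (convexHull ℝ (Set.range (fun i => fun j => ((v i j : ℤ) : ℝ)))))
    (huniq : ∀ q' : Fin d → ℤ,
      (fun j => ((q' j : ℤ) : ℝ)) ∈
        interior (convexHull ℝ (Set.range (fun i => fun j => ((v i j : ℤ) : ℝ)))) → q' = q)
    (β : Fin (d + 1) → ℝ)
    (hsum : ∑ i, β i = 1)
    (hbar : (∑ i, β i • (fun j => ((v i j : ℤ) : ℝ))) = fun j => ((q j : ℤ) : ℝ))
    (hord : ∀ i j : Fin (d + 1), i ≤ j → β j ≤ β i)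
    (hpos : ∀ i, 0 < β i)
    (hineq : ∀ j : ℕ, j < d →
      ∑ i ∈ Finset.univ.filter (fun i : Fin (d + 1) => j < (i : ℕ)), β i ≥
        ∏ i ∈ Finset.univ.filter (fun i : Fin (d + 1) => (i : ℕ) ≤ j), β i) :
    ∀ i : Fin (d + 1), β i ≥ (((d : ℝ) + 1) ^ (2 ^ (i : ℕ)))⁻¹ :=
  stmt2_general d β hsum hord hpos hineq
end

section
/- Let t₁ = 2 and t_n = t_{n−1}² − t_{n−1} + 1 for n ≥ 2, and let T' = conv{0, t₁e₁, …, t_de_d} ⊂ ℝ^d. Then the point e₁ + e₂ + ⋯ + e_d is the unique lattice point of ℤ^d in the interior of T'. -/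
/-!
With `c j = t (j + 1)`, the simplex is `{x | 0 ≤ x, ∑ x j / c j ≤ 1}`, with interior
`{x | 0 < x, ∑ x j / c j < 1}`. Since `t (n + 1) - 1 = t n * (t n - 1)`, the sum `∑_{j ≤ d} 1 / t j`
telescopes to `1 - 1 / (t (d + 1) - 1) < 1`, so `𝟙` is interior. An interior lattice point `q` has
all `q j ≥ 1`; if some `q j ≥ 2` then `∑ q i / c i ≥ ∑ 1 / c i + 1 / c j ≥ 1`, because the defect
`1 / (t (d + 1) - 1)` is at most every `1 / c j`.
-/

open Finset

section Sylvester

variable {t : ℕ → ℤ} (h1 : t 1 = 2)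
  (hrec : ∀ n : ℕ, 2 ≤ n → t n = t (n - 1) ^ 2 - t (n - 1) + 1)

include hrec in
lemma sylvester_succ_sub_one {n : ℕ} (hn : 1 ≤ n) : t (n + 1) - 1 = t n * (t n - 1) := by
  rw [hrec (n + 1) (by omega), Nat.add_sub_cancel]
  ring

include h1 hrec in
lemma two_le_sylvester {n : ℕ} (hn : 1 ≤ n) : 2 ≤ t n := by
  induction n, hn using Nat.le_induction with
  | base => exact h1.ge
  | succ n hn ih => nlinarith [sylvester_succ_sub_one hrec hn]

include h1 hrec in
lemma sylvester_strictMonoOn : StrictMonoOn t (Set.Ici 1) := by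
  refine strictMonoOn_of_lt_add_one Set.ordConnected_Ici fun n _ hn _ => ?_
  nlinarith [sylvester_succ_sub_one hrec (n := n) hn, two_le_sylvester h1 hrec (n := n) hn]

include h1 hrec in
lemma sum_range_inv_sylvester (N : ℕ) :
    ∑ j ∈ range N, 1 / (t (j + 1) : ℝ) = 1 - 1 / ((t (N + 1) : ℝ) - 1) := by
  induction N with
  | zero => norm_num [h1]
  | succ N ih =>
    have h2 : (2 : ℝ) ≤ t (N + 1) := by exact_mod_cast two_le_sylvester h1 hrec (by omega)
    have hsucc : (t (N + 2) : ℝ) - 1 = t (N + 1) * (t (N + 1) - 1) := by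
      exact_mod_cast sylvester_succ_sub_one hrec (n := N + 1) (by omega)
    rw [sum_range_succ, ih, hsucc]
    have : (t (N + 1) : ℝ) - 1 ≠ 0 := by linarith
    field_simp
    ring

include h1 hrec in
lemma sum_range_inv_sylvester_lt_one (N : ℕ) : ∑ j ∈ range N, 1 / (t (j + 1) : ℝ) < 1 := by
  have : (2 : ℝ) ≤ t (N + 1) := by exact_mod_cast two_le_sylvester h1 hrec (by omega)
  rw [sum_range_inv_sylvester h1 hrec, sub_lt_self_iff, one_div_pos]
  linarith

include h1 hrec in
lemma one_sub_sum_range_inv_sylvester_le {N j : ℕ} (hj : j < N) :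
    1 - ∑ k ∈ range N, 1 / (t (k + 1) : ℝ) ≤ 1 / t (j + 1) := by
  have hlt : t (j + 1) < t (N + 1) :=
    sylvester_strictMonoOn h1 hrec (by simp) (by simp) (by omega)
  have hpos : (0 : ℝ) < t (j + 1) := by
    exact_mod_cast (two_le_sylvester h1 hrec (by omega)).trans_lt' two_pos
  rw [sum_range_inv_sylvester h1 hrec, sub_sub_cancel]
  exact one_div_le_one_div_of_le hpos (by exact_mod_cast Int.le_sub_one_of_lt hlt)

end Sylvester

section CornerSimplex

variable {ι : Type*} [Fintype ι]

def cornerSimplex (c : ι → ℝ) : Set (ι → ℝ) := {x | (∀ i, 0 ≤ x i) ∧ ∑ i, x i / c i ≤ 1}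

variable {c : ι → ℝ}

lemma sum_single_div [DecidableEq ι] (i : ι) (a : ℝ) :
    ∑ j, (Pi.single i a : ι → ℝ) j / c j = a / c i := by
  simp [Pi.single_apply, ite_div]

lemma convex_cornerSimplex : Convex ℝ (cornerSimplex c) := by
  rintro x ⟨hx0, hx1⟩ y ⟨hy0, hy1⟩ a b ha hb hab
  refine ⟨fun i => ?_, ?_⟩
  · simp only [Pi.add_apply, Pi.smul_apply, smul_eq_mul]
    exact add_nonneg (mul_nonneg ha (hx0 i)) (mul_nonneg hb (hy0 i))
  · calc ∑ i, (a • x + b • y) i / c i = a * ∑ i, x i / c i + b * ∑ i, y i / c i := by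
          simp only [Pi.add_apply, Pi.smul_apply, smul_eq_mul, add_div, mul_div_assoc,
            sum_add_distrib, mul_sum]
      _ ≤ a * 1 + b * 1 := by gcongr
      _ = 1 := by rw [mul_one, mul_one, hab]

lemma convexHull_insert_zero_range_single [DecidableEq ι] (hc : ∀ i, 0 < c i) :
    convexHull ℝ (insert 0 (Set.range fun i => Pi.single i (c i))) = cornerSimplex c := by
  apply subset_antisymm
  · refine convexHull_min ?_ convex_cornerSimplex
    rintro _ (rfl | ⟨i, rfl⟩)
    · simp [cornerSimplex]
    · refine ⟨fun j => ?_, ?_⟩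
      · rcases eq_or_ne j i with rfl | hji
        · simpa using (hc j).le
        · simp [hji]
      · rw [sum_single_div, div_self (hc i).ne']
  · rintro x ⟨hx0, hx1⟩
    let w : Option ι → ℝ := fun o => o.elim (1 - ∑ i, x i / c i) fun i => x i / c i
    let p : Option ι → ι → ℝ := fun o => o.elim 0 fun i => Pi.single i (c i)
    have hx : ∑ o, w o • p o = x := by
      simp only [Fintype.sum_option, w, p, Option.elim, smul_zero, zero_add]
      conv_rhs => rw [← Finset.univ_sum_single x]
      refine sum_congr rfl fun i _ => ?_
      rw [← Pi.single_smul, smul_eq_mul, div_mul_cancel₀ _ (hc i).ne']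
    rw [← hx]
    refine (convex_convexHull ℝ _).sum_mem (fun o _ => ?_) ?_ (fun o _ => subset_convexHull ℝ _ ?_)
    · cases o
      · simpa [w] using hx1
      · exact div_nonneg (hx0 _) (hc _).le
    · simp [Fintype.sum_option, w]
    · cases o
      · simp [p]
      · simp [p]

lemma interior_cornerSimplex (hc : ∀ i, c i ≠ 0) :
    interior (cornerSimplex c) = {x | (∀ i, 0 < x i) ∧ ∑ i, x i / c i < 1} := by
  let f : (ι → ℝ) →L[ℝ] ℝ := ∑ i, (c i)⁻¹ • ContinuousLinearMap.proj i
  have hf : ∀ x, f x = ∑ i, x i / c i := fun x => by simp [f, div_eq_inv_mul]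
  have hS : cornerSimplex c = Set.univ.pi (fun _ => Set.Ici 0) ∩ f ⁻¹' Set.Iic 1 := by
    ext x; simp [cornerSimplex, hf, Pi.le_def]
  rcases isEmpty_or_nonempty ι with hι | ⟨⟨i₀⟩⟩
  · ext x; simp [cornerSimplex]
  classical
  have hsurj : Function.Surjective f := fun y =>
    ⟨Pi.single i₀ (y * c i₀), by rw [hf, sum_single_div, mul_div_cancel_right₀ _ (hc i₀)]⟩
  rw [hS, interior_inter, interior_pi_set Set.finite_univ, f.interior_preimage hsurj]
  ext x; simp [hf]

lemma eq_one_of_mem_interior_cornerSimplex (hc : ∀ i, 0 < c i) (hgap : ∀ j, 1 - ∑ i, 1 / c i ≤ 1 / c j) {q : ι → ℤ}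
    (hq : (fun i => (q i : ℝ)) ∈ interior (cornerSimplex c)) (j : ι) : q j = 1 := by
  rw [interior_cornerSimplex fun i => (hc i).ne'] at hq
  obtain ⟨hpos, hlt⟩ : (∀ i, (0 : ℝ) < q i) ∧ ∑ i, (q i : ℝ) / c i < 1 := hq
  have hq1 : ∀ i, 1 ≤ q i := fun i => Int.cast_pos.mp (hpos i)
  by_contra hj
  have hj2 : (2 : ℝ) ≤ q j := by exact_mod_cast (show 2 ≤ q j by have := hq1 j; omega)
  have hexcess : 1 / c j ≤ ∑ i, ((q i : ℝ) - 1) / c i :=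
    calc 1 / c j ≤ ((q j : ℝ) - 1) / c j := div_le_div_of_nonneg_right (by linarith) (hc j).le
      _ ≤ _ := single_le_sum (f := fun i => ((q i : ℝ) - 1) / c i)
          (fun i _ => div_nonneg (sub_nonneg.2 (by exact_mod_cast hq1 i)) (hc i).le) (mem_univ j)
  have hsplit : ∑ i, (q i : ℝ) / c i = ∑ i, 1 / c i + ∑ i, ((q i : ℝ) - 1) / c i := by
    rw [← sum_add_distrib]
    exact sum_congr rfl fun i _ => by ring
  linarith [hgap j]

end CornerSimplex

theorem stmt7_general (d : ℕ) (t : ℕ → ℤ) (h1 : t 1 = 2)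
    (hrec : ∀ n : ℕ, 2 ≤ n → t n = t (n - 1) ^ 2 - t (n - 1) + 1)
    (v : Fin (d + 1) → Fin d → ℝ)
    (hv : v = fun (i : Fin (d + 1)) (j : Fin d) => if (i : ℕ) = (j : ℕ) + 1 then ((t ((j : ℕ) + 1) : ℤ) : ℝ) else 0)
    (T : Set (Fin d → ℝ)) (hT : T = convexHull ℝ (Set.range v)) :
    (fun _ : Fin d => (1 : ℝ)) ∈ interior T ∧
      ∀ q : Fin d → ℤ, (fun j => ((q j : ℤ) : ℝ)) ∈ interior T →
        (fun j => ((q j : ℤ) : ℝ)) = fun _ : Fin d => (1 : ℝ) := by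
  set c : Fin d → ℝ := fun j => (t (j + 1) : ℝ)
  have hc : ∀ j, 0 < c j := fun j => by
    have := two_le_sylvester h1 hrec (n := j + 1) (by omega)
    simp only [c]; positivity
  have hvc : v = Fin.cons 0 fun j => Pi.single j (c j) := by
    subst hv
    funext i j
    cases i using Fin.cases with
    | zero => simp
    | succ i => by_cases h : j = i <;> simp [c, h, Fin.val_eq_val, eq_comm]
  have hTc : T = cornerSimplex c := by
    rw [hT, hvc, Fin.range_cons, convexHull_insert_zero_range_single hc]
  have hsum : ∑ j, 1 / c j = ∑ k ∈ range d, 1 / (t (k + 1) : ℝ) :=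
    Fin.sum_univ_eq_sum_range (fun k => 1 / (t (k + 1) : ℝ)) d
  have hgap : ∀ j, 1 - ∑ i, 1 / c i ≤ 1 / c j := fun j =>
    hsum ▸ one_sub_sum_range_inv_sylvester_le h1 hrec j.isLt
  subst hTc
  refine ⟨?_, fun q hq => funext fun j => by simp [eq_one_of_mem_interior_cornerSimplex hc hgap hq j]⟩
  rw [interior_cornerSimplex fun j => (hc j).ne']
  exact ⟨fun _ => one_pos, hsum ▸ sum_range_inv_sylvester_lt_one h1 hrec d⟩

/-- The simplex `T' = conv{0, t₁e₁, …, t_d e_d}` (Zaks–Perles–Wills/Hensley) has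
`e₁ + ⋯ + e_d` as its unique interior lattice point. -/
theorem stmt7 (d : ℕ) (hd : 0 < d) (t : ℕ → ℤ) (h1 : t 1 = 2)
    (hrec : ∀ n : ℕ, 2 ≤ n → t n = t (n - 1) ^ 2 - t (n - 1) + 1)
    (v : Fin (d + 1) → Fin d → ℝ)
    (hv : v = fun (i : Fin (d + 1)) (j : Fin d) => if (i : ℕ) = (j : ℕ) + 1 then ((t ((j : ℕ) + 1) : ℤ) : ℝ) else 0)
    (T : Set (Fin d → ℝ)) (hT : T = convexHull ℝ (Set.range v)) :
    (fun _ : Fin d => (1 : ℝ)) ∈ interior T ∧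
      ∀ q : Fin d → ℤ, (fun j => ((q j : ℤ) : ℝ)) ∈ interior T →
        (fun j => ((q j : ℤ) : ℝ)) = fun _ : Fin d => (1 : ℝ) :=
  stmt7_general d t h1 hrec v hv T hT
end

section
/- Let T be a d-dimensional simplex in ℝ^d with vertices p₀,…,p_d, let p be an interior point with barycentric coordinates β₀,…,β_d > 0, let (I,J) be a pair of disjoint sets with I ∪ J = {0,…,d} and J ≠ ∅, and let T_I = {x ∈ T : l_i(x) = β_i for all i ∈ I}, where l_i are the barycentric coordinate functions. Then T_I is a simplex of dimension |J| − 1 whose vertices are the points ∑_{i∈I} β_i p_i + β_J p_j for j ∈ J, where β_J = ∑_{j∈J} β_j. -/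
/-!
In barycentric coordinates with respect to `p`, the simplex is the set of nonnegative coordinate
vectors and `q j` has coordinates `β_i` on `I`, `β_J` at `j` and `0` elsewhere on `J`. So the `q j`
lie in the convex set `T_I`, and a point of `T_I` with coordinates `γ` is the convex combination
`∑_{j∈J} (γ_j / β_J) q_j`. The `q j` are the images of the face vertices `p j`,
`j ∈ J`, under the injective affine map `x ↦ ∑_{i∈I} β_i p_i + β_J x`, hence affinely independent.
-/

open Finset

namespace AffineBasis

section Ring

variable {ι k V P : Type*} [Ring k] [AddCommGroup V] [Module k V] [AddTorsor V P]

theorem eq_coord_of_apply_eq [DecidableEq ι] (b : AffineBasis ι k P) {i : ι} {l : P →ᵃ[k] k}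
    (hl : ∀ j, l (b j) = if i = j then 1 else 0) : l = b.coord i :=
  AffineMap.ext_on b.tot <| by rintro _ ⟨j, rfl⟩; rw [hl, b.coord_apply]

theorem coord_sum_smul_s8 [Fintype ι] (b : AffineBasis ι k V) {w : ι → k} (hw : ∑ j, w j = 1)
    (i : ι) : b.coord i (∑ j, w j • b j) = w i := by
  rw [← univ.affineCombination_eq_linear_combination _ _ hw,
    b.coord_apply_combination_of_mem (mem_univ i) hw]

/-- Vertices of the section of the simplex `b` through the point with barycentric coordinates `β`,
parallel to the face spanned by the `b j`, `j ∈ J`. -/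
def sectionVertex (b : AffineBasis ι k V) (I J : Finset ι) (β : ι → k) (j : J) : V :=
  ∑ i ∈ I, β i • b i + (∑ k ∈ J, β k) • b j

theorem coord_sectionVertex [Fintype ι] [DecidableEq ι] (b : AffineBasis ι k V)
    {I J : Finset ι} {β : ι → k} (hdisj : Disjoint I J) (hunion : I ∪ J = univ)
    (hβ : ∑ i, β i = 1) (j : J) (i : ι) :
    b.coord i (b.sectionVertex I J β j) =
      if i ∈ I then β i else if i = j then ∑ k ∈ J, β k else 0 := by
  set w : ι → k := fun i => if i ∈ I then β i else if i = j then ∑ k ∈ J, β k else 0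
  have hwI : ∀ i ∈ I, w i = β i := fun i hi => if_pos hi
  have hwJ : ∀ i ∈ J, w i = if i = j then ∑ k ∈ J, β k else 0 :=
    fun i hi => if_neg (disjoint_right.1 hdisj hi)
  have hw : ∑ i, w i = 1 := by
    rw [← hunion, sum_union hdisj, sum_congr rfl hwI, sum_congr rfl hwJ, sum_ite_eq', if_pos j.2,
      ← sum_union hdisj, hunion, hβ]
  have hwb : ∑ i, w i • b i = b.sectionVertex I J β j := by
    rw [← hunion, sum_union hdisj, sectionVertex]
    congr 1
    · exact sum_congr rfl fun i hi => by rw [hwI i hi]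
    · simp_rw [sum_congr rfl fun i hi => congrArg (· • b i) (hwJ i hi), ite_smul, zero_smul,
        sum_ite_eq', if_pos j.2]
  rw [← hwb, b.coord_sum_smul_s8 hw]

end Ring

section Field

variable {ι k V : Type*} [Field k] [AddCommGroup V] [Module k V] (b : AffineBasis ι k V)
  {I J : Finset ι} {β : ι → k}

theorem affineIndependent_sectionVertex (hβJ : ∑ j ∈ J, β j ≠ 0) :
    AffineIndependent k (b.sectionVertex I J β) := by
  have : b.sectionVertex I J β =
      (∑ i ∈ I, β i • b i) +ᵥ (Units.mk0 _ hβJ • (b ∘ (↑) : J → V)) := rfl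
  rw [this, affineIndependent_vadd, affineIndependent_smul]
  exact b.ind.comp_embedding (Function.Embedding.subtype _)

variable [LinearOrder k] [IsStrictOrderedRing k] [Fintype ι] [DecidableEq ι]

theorem convexHull_range_sectionVertex (hdisj : Disjoint I J) (hunion : I ∪ J = univ)
    (hβI : ∀ i ∈ I, 0 ≤ β i) (hβJ : 0 < ∑ j ∈ J, β j) (hβ : ∑ i, β i = 1) :
    convexHull k (Set.range (b.sectionVertex I J β)) =
      {x | (∀ i, 0 ≤ b.coord i x) ∧ ∀ i ∈ I, b.coord i x = β i} := by
  refine subset_antisymm (convexHull_min ?_ ?_) ?_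
  · rintro _ ⟨j, rfl⟩
    refine ⟨fun i => ?_, fun i hi => ?_⟩ <;> rw [b.coord_sectionVertex hdisj hunion hβ]
    · split_ifs with hiI <;> first | exact hβI i hiI | exact hβJ.le | exact le_rfl
    · exact if_pos hi
  · rintro x ⟨hx0, hxI⟩ y ⟨hy0, hyI⟩ a c ha hc hac
    refine ⟨fun i => ?_, fun i hi => ?_⟩ <;> rw [Convex.combo_affine_apply hac]
    · exact add_nonneg (smul_nonneg ha (hx0 i)) (smul_nonneg hc (hy0 i))
    · rw [hxI i hi, hyI i hi, ← add_smul, hac, one_smul]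
  · rintro x ⟨hx0, hxI⟩
    set βJ := ∑ j ∈ J, β j
    have hxJ : ∑ j ∈ J, b.coord j x = βJ := by
      have := b.sum_coord_apply_eq_one x
      rw [← hunion, sum_union hdisj, sum_congr rfl hxI, ← hβ, ← hunion, sum_union hdisj] at this
      exact add_left_cancel this
    have hc : ∑ j : J, b.coord j x / βJ = 1 := by
      rw [← sum_div, sum_coe_sort J (fun j => b.coord j x), hxJ, div_self hβJ.ne']
    have hx : ∑ j : J, (b.coord j x / βJ) • b.sectionVertex I J β j = x := by
      calc ∑ j : J, (b.coord j x / βJ) • b.sectionVertex I J β j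
          = (∑ j : J, b.coord j x / βJ) • ∑ i ∈ I, β i • b i
              + ∑ j : J, (b.coord j x / βJ * βJ) • b j := by
            simp only [sectionVertex, smul_add, sum_add_distrib, smul_smul, ← sum_smul]
            rfl
        _ = ∑ i ∈ I, b.coord i x • b i + ∑ j ∈ J, b.coord j x • b j := by
            rw [hc, one_smul]
            congr 1
            · exact sum_congr rfl fun i hi => by rw [hxI i hi]
            · simp only [div_mul_cancel₀ _ hβJ.ne']
              exact sum_coe_sort J fun j => b.coord j x • b j
        _ = x := by
            rw [← sum_union hdisj, hunion, b.linear_combination_coord_eq_self]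
    rw [← hx]
    exact (convex_convexHull k _).sum_mem (fun j _ => div_nonneg (hx0 j) hβJ.le) hc
      fun j _ => subset_convexHull k _ ⟨j, rfl⟩

end Field

end AffineBasis

/-- The section `T_I` of a simplex through an interior point `p`, parallel to the face
`F_I`, is a simplex of dimension `|J| - 1` with vertices `∑_{i∈I} β_i p_i + β_J p_j`, `j ∈ J`. -/
theorem stmt8 (d : ℕ) (p : Fin (d + 1) → Fin d → ℝ) (hp : AffineIndependent ℝ p)
    (l : Fin (d + 1) → ((Fin d → ℝ) →ᵃ[ℝ] ℝ))
    (hl : ∀ i j : Fin (d + 1), l i (p j) = if i = j then 1 else 0)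
    (β : Fin (d + 1) → ℝ) (hβpos : ∀ i, 0 < β i) (hβsum : ∑ i, β i = 1)
    (I J : Finset (Fin (d + 1))) (hdisj : Disjoint I J)
    (hunion : I ∪ J = Finset.univ) (hJ : J.Nonempty)
    (T TI : Set (Fin d → ℝ)) (hT : T = convexHull ℝ (Set.range p))
    (hTI : TI = {x ∈ T | ∀ i ∈ I, l i x = β i})
    (q : J → (Fin d → ℝ))
    (hq : ∀ j : J, q j = (∑ i ∈ I, β i • p i) + (∑ k ∈ J, β k) • p (j : Fin (d + 1))) :
    TI = convexHull ℝ (Set.range q) ∧ AffineIndependent ℝ q := by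
  let b : AffineBasis (Fin (d + 1)) ℝ (Fin d → ℝ) :=
    ⟨p, hp, hp.affineSpan_eq_top_iff_card_eq_finrank_add_one.2 (by simp)⟩
  have hlb : l = b.coord := funext fun i => b.eq_coord_of_apply_eq (hl i)
  have hqb : q = b.sectionVertex I J β := funext hq
  have hβJ : 0 < ∑ j ∈ J, β j := sum_pos (fun j _ => hβpos j) hJ
  subst hT hTI hlb hqb
  refine ⟨?_, b.affineIndependent_sectionVertex hβJ.ne'⟩
  rw [b.convexHull_range_sectionVertex hdisj hunion (fun i _ => (hβpos i).le) hβJ hβsum,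
    show Set.range p = Set.range b from rfl, b.convexHull_eq_nonneg_coord]
  rfl
end

section
/- Let T be a d-dimensional simplex with vertices p₀,…,p_d, p an interior point with barycentric coordinates β₀,…,β_d, (I,J) disjoint with I ∪ J = {0,…,d}, J ≠ ∅. Let T_I = {x ∈ T : l_i(x) = β_i for all i ∈ I} and F_I = conv{p_j : j ∈ J}. Then vol(T_I) = β_J^{|J|−1} · vol(F_I), where β_J = ∑_{j∈J} β_j and vol denotes (|J|−1)-dimensional volume. -/
open MeasureTheory Pointwise

lemma rep_mem {d n : ℕ} (p : Fin n → Fin d → ℝ) (S : Finset (Fin n)) (x : Fin d → ℝ) :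
    x ∈ convexHull ℝ (p '' ↑S) ↔
      ∃ w : Fin n → ℝ, (∀ i, 0 ≤ w i) ∧ ∑ i ∈ S, w i = 1 ∧ ∑ i ∈ S, w i • p i = x := by
  constructor
  · intro hx
    have hconv : Convex ℝ {x : Fin d → ℝ | ∃ w : Fin n → ℝ,
        (∀ i, 0 ≤ w i) ∧ ∑ i ∈ S, w i = 1 ∧ ∑ i ∈ S, w i • p i = x} := by
      rintro x ⟨w, hw0, hw1, hwx⟩ y ⟨u, hu0, hu1, huy⟩ a b ha hb hab
      refine ⟨fun i => a * w i + b * u i,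
        fun i => add_nonneg (mul_nonneg ha (hw0 i)) (mul_nonneg hb (hu0 i)), ?_, ?_⟩
      · simp [Finset.sum_add_distrib, ← Finset.mul_sum, hw1, hu1, hab]
      · simp only [add_smul, mul_smul, Finset.sum_add_distrib, ← Finset.smul_sum, hwx, huy]
    refine convexHull_min ?_ hconv hx
    rintro _ ⟨j, hj, rfl⟩
    exact ⟨fun i => if i = j then 1 else 0, fun i => by dsimp only; split <;> norm_num,
      by simp [Finset.mem_coe.mp hj], by simp [ite_smul, Finset.mem_coe.mp hj]⟩
  · rintro ⟨w, hw0, hw1, rfl⟩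
    rw [← Finset.centerMass_eq_of_sum_1 _ _ hw1]
    exact S.centerMass_mem_convexHull (fun i _ => hw0 i) (hw1 ▸ one_pos)
      (fun i hi => Set.mem_image_of_mem _ hi)

lemma l_of_comb {d : ℕ} (p : Fin (d + 1) → Fin d → ℝ)
    (l : Fin (d + 1) → ((Fin d → ℝ) →ᵃ[ℝ] ℝ))
    (hl : ∀ i j : Fin (d + 1), l i (p j) = if i = j then 1 else 0)
    (w : Fin (d + 1) → ℝ) (hw : ∑ i, w i = 1) (i : Fin (d + 1)) :
    l i (∑ k, w k • p k) = w i := by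
  have h1 : (∑ k, w k • p k) = Finset.univ.affineCombination ℝ p w :=
    (Finset.univ.affineCombination_eq_linear_combination p w hw).symm
  rw [h1, Finset.map_affineCombination _ p w hw (l i),
    Finset.univ.affineCombination_eq_linear_combination _ w hw]
  simp [Function.comp, hl, smul_eq_mul, mul_ite]

/-- `vol(T_I) = β_J^{|J|-1} · vol(F_I)`, where the `(|J|-1)`-dimensional volume is
taken as the `(|J|-1)`-dimensional Hausdorff measure. -/
theorem stmt9 (d : ℕ) (p : Fin (d + 1) → Fin d → ℝ) (hp : AffineIndependent ℝ p)
    (l : Fin (d + 1) → ((Fin d → ℝ) →ᵃ[ℝ] ℝ))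
    (hl : ∀ i j : Fin (d + 1), l i (p j) = if i = j then 1 else 0)
    (β : Fin (d + 1) → ℝ) (hβpos : ∀ i, 0 < β i) (hβsum : ∑ i, β i = 1)
    (I J : Finset (Fin (d + 1))) (hdisj : Disjoint I J)
    (hunion : I ∪ J = Finset.univ) (hJ : J.Nonempty)
    (T TI FI : Set (Fin d → ℝ)) (hT : T = convexHull ℝ (Set.range p))
    (hTI : TI = {x ∈ T | ∀ i ∈ I, l i x = β i})
    (hFI : FI = convexHull ℝ (p '' ↑J)) :
    μH[(J.card : ℝ) - 1] TI =
      ENNReal.ofReal ((∑ k ∈ J, β k) ^ (J.card - 1)) * μH[(J.card : ℝ) - 1] FI := by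
  set βJ : ℝ := ∑ k ∈ J, β k with hβJ
  have hβJpos : 0 < βJ := Finset.sum_pos (fun k _ => hβpos k) hJ
  have hsplit : ∑ i ∈ I, β i + βJ = 1 := by
    rw [hβJ, ← Finset.sum_union hdisj, hunion, hβsum]
  have hrangeT : T = convexHull ℝ (p '' ↑(Finset.univ : Finset (Fin (d + 1)))) := by
    rw [hT, Finset.coe_univ, Set.image_univ]
  -- key set identity
  have hkey : TI = (fun y => (∑ i ∈ I, β i • p i) + βJ • y) '' FI := by
    ext x
    constructor
    · rintro hx
      rw [hTI] at hx
      obtain ⟨hxT, hxl⟩ := hx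
      rw [hrangeT, rep_mem] at hxT
      obtain ⟨w, hw0, hw1, hwx⟩ := hxT
      have hwI : ∀ i ∈ I, w i = β i := by
        intro i hi
        have := l_of_comb p l hl w hw1 i
        rw [hwx] at this
        rw [← this, hxl i hi]
      have hwJ : ∑ j ∈ J, w j = βJ := by
        have : ∑ i ∈ I, w i + ∑ j ∈ J, w j = 1 := by
          rw [← Finset.sum_union hdisj, hunion, hw1]
        have hI : ∑ i ∈ I, w i = ∑ i ∈ I, β i := Finset.sum_congr rfl hwI
        linarith [hsplit]
      refine ⟨∑ j ∈ J, (w j / βJ) • p j, ?_, ?_⟩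
      · rw [hFI, rep_mem]
        exact ⟨fun j => w j / βJ, fun j => div_nonneg (hw0 j) hβJpos.le,
          by rw [← Finset.sum_div, hwJ, div_self hβJpos.ne'], rfl⟩
      · beta_reduce
        rw [Finset.smul_sum]
        have : ∀ j ∈ J, βJ • ((w j / βJ) • p j) = w j • p j := by
          intro j _
          rw [smul_smul, mul_div_cancel₀ _ hβJpos.ne']
        rw [Finset.sum_congr rfl this, ← hwx]
        have hIcong : ∑ i ∈ I, β i • p i = ∑ i ∈ I, w i • p i :=
          Finset.sum_congr rfl (fun i hi => by rw [hwI i hi])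
        rw [hIcong, ← Finset.sum_union hdisj, hunion]
    · rintro ⟨y, hy, rfl⟩
      rw [hFI, rep_mem] at hy
      obtain ⟨u, hu0, hu1, huy⟩ := hy
      set w : Fin (d + 1) → ℝ := fun i => if i ∈ I then β i else βJ * u i with hwdef
      have hw0 : ∀ i, 0 ≤ w i := fun i => by
        simp only [hwdef]; split
        · exact (hβpos i).le
        · exact mul_nonneg hβJpos.le (hu0 i)
      have hwI : ∑ i ∈ I, w i = ∑ i ∈ I, β i :=
        Finset.sum_congr rfl (fun i hi => by simp [hwdef, hi])
      have hwJ : ∑ j ∈ J, w j = βJ := by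
        have : ∀ j ∈ J, w j = βJ * u j := fun j hj => by
          simp [hwdef, Finset.disjoint_right.mp hdisj hj]
        rw [Finset.sum_congr rfl this, ← Finset.mul_sum, hu1, mul_one]
      have hw1 : ∑ i, w i = 1 := by
        rw [← hunion, Finset.sum_union hdisj, hwI, hwJ, hsplit]
      have hwx : ∑ i, w i • p i = (∑ i ∈ I, β i • p i) + βJ • y := by
        rw [← hunion, Finset.sum_union hdisj]
        congr 1
        · exact Finset.sum_congr rfl (fun i hi => by simp [hwdef, hi])
        · rw [← huy, Finset.smul_sum]
          refine Finset.sum_congr rfl (fun j hj => ?_)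
          simp [hwdef, Finset.disjoint_right.mp hdisj hj, smul_smul]
      rw [hTI]
      constructor
      · rw [hrangeT, rep_mem]
        exact ⟨w, hw0, by simpa using hw1, by simpa using hwx⟩
      · intro i hi
        beta_reduce
        rw [← hwx, l_of_comb p l hl w hw1 i]
        simp [hwdef, hi]
  -- measure computation
  have hcard : 1 ≤ J.card := Finset.Nonempty.card_pos hJ
  have hdnn : (0 : ℝ) ≤ (J.card : ℝ) - 1 := by
    have : (1 : ℝ) ≤ (J.card : ℝ) := by exact_mod_cast hcard
    linarith
  have himg : (fun y => (∑ i ∈ I, β i • p i) + βJ • y) '' FI =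
      (fun y => (∑ i ∈ I, β i • p i) + y) '' (βJ • FI) := by
    rw [← Set.image_smul, Set.image_image]
  rw [hkey, himg]
  have htrans : μH[(J.card : ℝ) - 1] ((fun y => (∑ i ∈ I, β i • p i) + y) '' (βJ • FI)) =
      μH[(J.card : ℝ) - 1] (βJ • FI) := by
    exact (IsometryEquiv.addLeft (∑ i ∈ I, β i • p i)).hausdorffMeasure_image _ _
  rw [htrans, Measure.hausdorffMeasure_smul₀ hdnn hβJpos.ne' FI, ENNReal.smul_def, smul_eq_mul]
  congr 1
  have hcast : ((J.card : ℝ) - 1) = ((J.card - 1 : ℕ) : ℝ) := by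
    rw [Nat.cast_sub hcard, Nat.cast_one]
  rw [hcast, ENNReal.ofReal_pow hβJpos.le]
  norm_cast
  congr 1
  congr 1
  ext
  simp [Real.coe_toNNReal _ hβJpos.le]
  exact hβJpos.le
end

section
/- Let T be a d-dimensional simplex in ℝ^d with vertices p₀,…,p_d and barycentric coordinate functions l₀,…,l_d, let p be an interior point of T with barycentric coordinates β₀,…,β_d > 0, and let P = {x ∈ ℝ^d : 0 ≤ l_i(x) ≤ 2β_i for i = 1,…,d}. Then P is contained in T ∪ (2p − T). -/
/-- The parallelotope `P = {x : 0 ≤ l_i(x) ≤ 2β_i, i = 1,…,d}` centered at the interior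
point `p` is contained in `T ∪ (2p - T)`. -/
theorem stmt10 (d : ℕ) (p : Fin (d + 1) → Fin d → ℝ) (hp : AffineIndependent ℝ p)
    (l : Fin (d + 1) → ((Fin d → ℝ) →ᵃ[ℝ] ℝ))
    (hl : ∀ i j : Fin (d + 1), l i (p j) = if i = j then 1 else 0)
    (β : Fin (d + 1) → ℝ) (hβpos : ∀ i, 0 < β i) (hβsum : ∑ i, β i = 1)
    (x₀ : Fin d → ℝ) (hx₀ : x₀ = ∑ i, β i • p i)
    (T P : Set (Fin d → ℝ)) (hT : T = convexHull ℝ (Set.range p))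
    (hP : P = {x | ∀ i : Fin (d + 1), i ≠ 0 → 0 ≤ l i x ∧ l i x ≤ 2 * β i}) :
    ∀ x ∈ P, x ∈ T ∨ (2 : ℝ) • x₀ - x ∈ T := by
  classical
  have htop : affineSpan ℝ (Set.range p) = ⊤ := by
    rw [hp.affineSpan_eq_top_iff_card_eq_finrank_add_one]
    simp [Module.finrank_fintype_fun_eq_card]
  set b : AffineBasis (Fin (d + 1)) ℝ (Fin d → ℝ) := ⟨p, hp, htop⟩ with hb
  -- key: l i of an affine combination with weights w is w i
  have key : ∀ (w : Fin (d + 1) → ℝ), (∑ j, w j = 1) →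
      ∀ i, l i (∑ j, w j • p j) = w i := by
    intro w hw i
    rw [← Finset.univ.affineCombination_eq_linear_combination p w hw,
      Finset.univ.map_affineCombination p w hw (l i),
      Finset.univ.affineCombination_eq_linear_combination _ _ hw]
    simp only [Function.comp_apply, hl, smul_eq_mul, mul_ite, mul_one, mul_zero]
    simp
  -- l i x = b.coord i x for all x
  have hlc : ∀ (x : Fin d → ℝ) (i), l i x = b.coord i x := by
    intro x i
    have hs : ∑ j, b.coord j x = 1 := b.sum_coord_apply_eq_one x
    have hx : ∑ j, b.coord j x • p j = x := b.linear_combination_coord_eq_self x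
    calc l i x = l i (∑ j, b.coord j x • p j) := by rw [hx]
    _ = b.coord i x := key _ hs i
  have hsum1 : ∀ x : Fin d → ℝ, ∑ i, l i x = 1 := by
    intro x
    simp only [hlc]
    exact b.sum_coord_apply_eq_one x
  have hdec : ∀ x : Fin d → ℝ, ∑ i, l i x • p i = x := by
    intro x
    simp only [hlc]
    exact b.linear_combination_coord_eq_self x
  -- membership criterion
  have hmem : ∀ x : Fin d → ℝ, (∀ i, 0 ≤ l i x) → x ∈ T := by
    intro x hpos
    rw [hT, ← hdec x,
      ← Finset.univ.affineCombination_eq_linear_combination p _ (hsum1 x)]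
    exact affineCombination_mem_convexHull (fun i _ => hpos i) (hsum1 x)
  -- l i x₀ = β i
  have hlx₀ : ∀ i, l i x₀ = β i := by
    intro i
    rw [hx₀]
    exact key β hβsum i
  -- l i (2 • x₀ - x) = 2 * β i - l i x
  have hrefl : ∀ (x : Fin d → ℝ) (i), l i ((2 : ℝ) • x₀ - x) = 2 * β i - l i x := by
    intro x i
    have h1 : (2 : ℝ) • x₀ - x = (x₀ - x) +ᵥ x₀ := by
      simp only [vadd_eq_add, two_smul]
      abel
    rw [h1, AffineMap.map_vadd]
    have h2 : (l i).linear (x₀ - x) = l i x₀ - l i x := by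
      have := (l i).linearMap_vsub x₀ x
      simpa [vsub_eq_sub] using this
    simp only [h2, vadd_eq_add, hlx₀ i]
    ring
  intro x hx
  rw [hP] at hx
  by_cases h0 : 0 ≤ l 0 x
  · left
    apply hmem
    intro i
    by_cases hi : i = 0
    · subst hi; exact h0
    · exact (hx i hi).1
  · right
    apply hmem
    intro i
    rw [hrefl x i]
    by_cases hi : i = 0
    · subst hi
      have := hβpos 0
      linarith [lt_of_not_ge h0]
    · linarith [(hx i hi).2]
end

section
/- Let β₀,…,β_d be the barycentric coordinates of a point with respect to a d-simplex, all positive, summing to 1, and suppose for some partition (I,J) of {0,…,d} and some indices i ∈ I, j ∈ J one has β_i > β_j. Let I' = (I \ {i}) ∪ {j} and J' = (J \ {j}) ∪ {i}. Then the inequality ∑_{k∈I'} β_k ≥ ∏_{k∈J'} β_k implies the inequality ∑_{k∈I} β_k ≥ ∏_{k∈J} β_k. -/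
/-- Redundancy of the inequalities of Theorem 1: if `β_i > β_j` for some `i ∈ I`, `j ∈ J`,
then the inequality for the swapped partition `(I', J')` implies the one for `(I, J)`. -/
theorem stmt17 (d : ℕ) (β : Fin (d + 1) → ℝ)
    (hpos : ∀ k, 0 < β k) (hlt : ∀ k, β k < 1) (hsum : ∑ k, β k = 1)
    (I J : Finset (Fin (d + 1))) (hI : I.Nonempty) (hJ : J.Nonempty)
    (hdisj : Disjoint I J) (hunion : I ∪ J = Finset.univ)
    (i j : Fin (d + 1)) (hi : i ∈ I) (hj : j ∈ J) (hij : β i > β j)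
    (I' J' : Finset (Fin (d + 1)))
    (hI' : I' = insert j (I.erase i)) (hJ' : J' = insert i (J.erase j))
    (h : ∑ k ∈ I', β k ≥ ∏ k ∈ J', β k) :
    ∑ k ∈ I, β k ≥ ∏ k ∈ J, β k := by
  have hjI : j ∉ I := fun hjI => (Finset.disjoint_left.mp hdisj hjI) hj
  have hiJ : i ∉ J := fun hiJ => (Finset.disjoint_left.mp hdisj hi) hiJ
  have hsumI : ∑ k ∈ I, β k = β i + ∑ k ∈ I.erase i, β k :=
    (Finset.add_sum_erase _ _ hi).symm
  have hsumI' : ∑ k ∈ I', β k = β j + ∑ k ∈ I.erase i, β k := by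
    rw [hI', Finset.sum_insert (fun hm => hjI (Finset.mem_of_mem_erase hm))]
  have hprodJ : ∏ k ∈ J, β k = β j * ∏ k ∈ J.erase j, β k :=
    (Finset.mul_prod_erase _ _ hj).symm
  have hprodJ' : ∏ k ∈ J', β k = β i * ∏ k ∈ J.erase j, β k := by
    rw [hJ', Finset.prod_insert (fun hm => hiJ (Finset.mem_of_mem_erase hm))]
  have hT : 0 ≤ ∏ k ∈ J.erase j, β k := Finset.prod_nonneg fun k _ => (hpos k).le
  rw [hsumI', hprodJ'] at h
  rw [hsumI, hprodJ]
  nlinarith [hpos i, hpos j]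
end
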